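/- arXiv:1002.2511 — 2 statements merged into one kernel-verified Lean document; each statement's English description precedes it below -/
import Mathlib

section
/- Geometric measure of Dür's multipartite entangled states: let N ≥ 4 and 0 ≤ x ≤ 1, and on (ℂ²)^{⊗N} define ρ_N(x) = x|Ψ_G⟩⟨Ψ_G| + ((1−x)/(2N)) Σ_{k=1}^N (|u_k⟩⟨u_k| + |v_k⟩⟨v_k|), where |Ψ_G⟩ = (|0⟩^{⊗N} + |1⟩^{⊗N})/√2, |u_k⟩ is the computational basis vector with entry 1 in position k and 0 in all other positions, and |v_k⟩ is the computational basis vector with entry 0 in position k and 1 in all other positions. Then Λ²(ρ_N(x)) = max{(1−x)/(2N), x/2}; that is, Λ²(ρ_N(x)) = (1−x)/(2N) for 0 ≤ x ≤ 1/(N+1) and Λ²(ρ_N(x)) = x/2 for 1/(N+1) ≤ x ≤ 1. -/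
open scoped BigOperators ComplexOrder

namespace Paper

/-- `a` is an ℓ²-normalized (unit) vector. -/
def IsUnitVec {n : Type*} [Fintype n] (a : n → ℂ) : Prop :=
  ∑ x, ‖a x‖ ^ 2 = 1

/-- A density matrix: positive semidefinite with trace 1. -/
def IsDensityMatrix {n : Type*} [Fintype n] (ρ : Matrix n n ℂ) : Prop :=
  ρ.PosSemidef ∧ ρ.trace = 1

/-- ⟨φ|ρ|φ⟩ (its real part). -/
noncomputable def overlap {n : Type*} [Fintype n] (ρ : Matrix n n ℂ) (φ : n → ℂ) : ℝ :=
  (dotProduct (star φ) (ρ.mulVec φ)).re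

/-- The product vector a_1 ⊗ ⋯ ⊗ a_N. -/
def prodVec {N : ℕ} {ι : Fin N → Type*} (a : ∀ j, ι j → ℂ) : (∀ j, ι j) → ℂ :=
  fun i => ∏ j, a j (i j)

/-- Λ²(ρ): the maximal overlap of ρ with product vectors. -/
noncomputable def maxOverlap {N : ℕ} {ι : Fin N → Type*} [∀ j, Fintype (ι j)]
    (ρ : Matrix (∀ j, ι j) (∀ j, ι j) ℂ) : ℝ :=
  sSup {r : ℝ | ∃ a : ∀ j, ι j → ℂ, (∀ j, IsUnitVec (a j)) ∧ r = overlap ρ (prodVec a)}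

/-- The geometric measure of entanglement G(ρ) = −log₂ Λ²(ρ). -/
noncomputable def gm {N : ℕ} {ι : Fin N → Type*} [∀ j, Fintype (ι j)]
    (ρ : Matrix (∀ j, ι j) (∀ j, ι j) ℂ) : ℝ :=
  -Real.logb 2 (maxOverlap ρ)

/-- ρ has non-negative (real) entries in the computational basis. -/
def IsNonnegMatrix {n : Type*} (ρ : Matrix n n ℂ) : Prop :=
  ∀ i i', 0 ≤ (ρ i i').re ∧ (ρ i i').im = 0

/-- The tensor product ρ ⊗ σ regarded as N-partite by grouping corresponding parties. -/
def tensorGrouped {N : ℕ} {ι κ : Fin N → Type*}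
    (ρ : Matrix (∀ j, ι j) (∀ j, ι j) ℂ) (σ : Matrix (∀ j, κ j) (∀ j, κ j) ℂ) :
    Matrix (∀ j, ι j × κ j) (∀ j, ι j × κ j) ℂ :=
  fun i i' => ρ (fun j => (i j).1) (fun j => (i' j).1) * σ (fun j => (i j).2) (fun j => (i' j).2)

/-- The n-fold tensor power ρ^{⊗n} regarded as N-partite by grouping the n copies of each party. -/
def tensorPow {N : ℕ} {ι : Fin N → Type*}
    (ρ : Matrix (∀ j, ι j) (∀ j, ι j) ℂ) (n : ℕ) :
    Matrix (∀ j, Fin n → ι j) (∀ j, Fin n → ι j) ℂ :=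
  fun i i' => ∏ k, ρ (fun j => i j k) (fun j => i' j k)
/-- The outer product |ψ⟩⟨ψ|. -/
def outer {n : Type*} (ψ : n → ℂ) : Matrix n n ℂ :=
  fun i i' => ψ i * starRingEnd ℂ (ψ i')

/-- The standard basis vector |g⟩. -/
def basisVec {n : Type*} [DecidableEq n] (g : n) : n → ℂ :=
  fun y => if y = g then 1 else 0

/-- The N-qubit GHZ vector (|0…0⟩ + |1…1⟩)/√2. -/
noncomputable def ghzVec (N : ℕ) : (Fin N → Fin 2) → ℂ := fun i =>
  if i = (fun _ => 0) then ((1 / Real.sqrt 2 : ℝ) : ℂ)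
  else if i = (fun _ => 1) then ((1 / Real.sqrt 2 : ℝ) : ℂ)
  else 0

/-- The computational basis label with 1 in position k and 0 elsewhere. -/
def uLabel {N : ℕ} (k : Fin N) : Fin N → Fin 2 := fun j => if j = k then 1 else 0

/-- The computational basis label with 0 in position k and 1 elsewhere. -/
def vLabel {N : ℕ} (k : Fin N) : Fin N → Fin 2 := fun j => if j = k then 0 else 1

/-- Dür's multipartite entangled state
ρ_N(x) = x|Ψ_G⟩⟨Ψ_G| + ((1−x)/(2N)) Σ_k (|u_k⟩⟨u_k| + |v_k⟩⟨v_k|). -/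
noncomputable def durState (N : ℕ) (x : ℝ) : Matrix (Fin N → Fin 2) (Fin N → Fin 2) ℂ :=
  ((x : ℝ) : ℂ) • outer (ghzVec N) +
    (((1 - x) / (2 * N) : ℝ) : ℂ) •
      ∑ k : Fin N, (outer (basisVec (uLabel k)) + outer (basisVec (vLabel k)))


open Finset in
lemma key_ineq {N : ℕ} (hN : 4 ≤ N) (p q : Fin N → ℝ)
    (hp : ∀ j, 0 ≤ p j) (hq : ∀ j, 0 ≤ q j) (hpq : ∀ j, p j + q j = 1)
    (c : ℝ) (hc0 : 0 ≤ c) (hc : c ^ 2 ≤ (∏ j, p j) * ∏ j, q j) :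
    ∏ j, p j + ∏ j, q j + 2 * c +
      ∑ k, (q k * ∏ j ∈ univ.erase k, p j + p k * ∏ j ∈ univ.erase k, q j) ≤ 1 := by
  classical
  set t : Finset (Fin N) → ℝ := fun A => (∏ j ∈ A, p j) * ∏ j ∈ univ \ A, q j with ht
  have ht0 : ∀ A, 0 ≤ t A := fun A =>
    mul_nonneg (prod_nonneg fun j _ => hp j) (prod_nonneg fun j _ => hq j)
  have hexp : ∑ A : Finset (Fin N), t A = 1 := by
    rw [← powerset_univ]
    rw [← Finset.prod_add]
    rw [Finset.prod_congr rfl fun j _ => hpq j, prod_const_one]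
  have hj0 : (0 : ℕ) < N := by omega
  have hj1 : (1 : ℕ) < N := by omega
  set j0 : Fin N := ⟨0, hj0⟩
  set j1 : Fin N := ⟨1, hj1⟩
  have hj01 : j0 ≠ j1 := by simp [j0, j1, Fin.ext_iff]
  set A₀ : Finset (Fin N) := {j0, j1} with hA₀
  set B₀ : Finset (Fin N) := univ \ A₀ with hB₀
  have hA₀card : A₀.card = 2 := by
    rw [hA₀, card_insert_of_notMem (by simp [hj01]), card_singleton]
  have hB₀card : B₀.card = N - 2 := by
    rw [hB₀, card_sdiff_of_subset (subset_univ _), card_univ, Fintype.card_fin, hA₀card]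
  set I₁ : Finset (Finset (Fin N)) := univ.image (fun k : Fin N => ({k} : Finset (Fin N))) with hI₁
  set I₂ : Finset (Finset (Fin N)) := univ.image (fun k : Fin N => univ \ ({k} : Finset (Fin N))) with hI₂
  have hcard1 : ∀ A ∈ I₁, A.card = 1 := by
    intro A hA; rw [hI₁, mem_image] at hA; obtain ⟨k, -, rfl⟩ := hA; simp
  have hcard2 : ∀ A ∈ I₂, A.card = N - 1 := by
    intro A hA; rw [hI₂, mem_image] at hA; obtain ⟨k, -, rfl⟩ := hA
    rw [card_sdiff_of_subset (subset_univ _), card_univ, Fintype.card_fin, card_singleton]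
  have hcardU : ∀ A ∈ I₁ ∪ I₂, A.card = 1 ∨ A.card = N - 1 := by
    intro A hA; rcases mem_union.mp hA with h | h
    · exact Or.inl (hcard1 A h)
    · exact Or.inr (hcard2 A h)
  have h4' : B₀ ∉ I₁ ∪ I₂ := by
    intro h; rcases hcardU _ h with h' | h' <;> rw [hB₀card] at h' <;> omega
  have h3' : A₀ ∉ insert B₀ (I₁ ∪ I₂) := by
    intro h; rcases mem_insert.mp h with h | h
    · have : j0 ∈ B₀ := by rw [← h]; exact mem_insert_self _ _
      rw [hB₀] at this
      simp [hA₀] at this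
    · rcases hcardU _ h with h' | h' <;> rw [hA₀card] at h' <;> omega
  have h2' : (∅ : Finset (Fin N)) ∉ insert A₀ (insert B₀ (I₁ ∪ I₂)) := by
    intro h; rcases mem_insert.mp h with h | h
    · rw [← h] at hA₀card; simp at hA₀card
    rcases mem_insert.mp h with h | h
    · rw [← h] at hB₀card; simp at hB₀card; omega
    · rcases hcardU _ h with h' | h' <;> simp at h' <;> omega
  have h1' : (univ : Finset (Fin N)) ∉ insert ∅ (insert A₀ (insert B₀ (I₁ ∪ I₂))) := by
    have hNc : (univ : Finset (Fin N)).card = N := by rw [card_univ, Fintype.card_fin]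
    intro h; rcases mem_insert.mp h with h | h
    · rw [h] at hNc; simp at hNc; omega
    rcases mem_insert.mp h with h | h
    · rw [← h, hNc] at hA₀card; omega
    rcases mem_insert.mp h with h | h
    · rw [← h, hNc] at hB₀card; omega
    · rcases hcardU _ h with h' | h' <;> rw [hNc] at h' <;> omega
  have hdisj : Disjoint I₁ I₂ := by
    rw [Finset.disjoint_left]
    intro A h1 h2
    have := hcard1 A h1
    have := hcard2 A h2
    omega
  set 𝒮 : Finset (Finset (Fin N)) := insert univ (insert ∅ (insert A₀ (insert B₀ (I₁ ∪ I₂)))) with h𝒮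
  have hle : ∑ A ∈ 𝒮, t A ≤ 1 := by
    rw [← hexp]
    exact sum_le_sum_of_subset_of_nonneg (subset_univ _) (fun A _ _ => ht0 A)
  rw [h𝒮, sum_insert h1', sum_insert h2', sum_insert h3', sum_insert h4', sum_union hdisj] at hle
  rw [hI₁, sum_image (by intro a _ b _ h; exact Finset.singleton_inj.mp h)] at hle
  rw [hI₂, sum_image (by
    intro a _ b _ h
    have := congrArg (fun S => (univ : Finset (Fin N)) \ S) h
    simpa [Finset.sdiff_sdiff_self_left] using this)] at hle
  -- evaluate the terms
  have htuniv : t univ = ∏ j, p j := by simp [ht]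
  have htempty : t ∅ = ∏ j, q j := by simp [ht]
  have htsing : ∀ k : Fin N, t {k} = p k * ∏ j ∈ univ.erase k, q j := by
    intro k; simp only [ht, prod_singleton]
    congr 1
    rw [Finset.erase_eq]
  have htcos : ∀ k : Fin N, t (univ \ {k}) = (∏ j ∈ univ.erase k, p j) * q k := by
    intro k; simp only [ht]
    rw [Finset.sdiff_sdiff_self_left]
    congr 1
    · rw [Finset.erase_eq]
    · simp
  have hcross : 2 * c ≤ t A₀ + t B₀ := by
    have hAB : t A₀ * t B₀ = (∏ j, p j) * ∏ j, q j := by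
      simp only [ht, hB₀, Finset.sdiff_sdiff_self_left, univ_inter]
      have h1 : (∏ j ∈ A₀, p j) * ∏ j ∈ univ \ A₀, p j = ∏ j, p j := by
        rw [mul_comm]; exact Finset.prod_sdiff (subset_univ _)
      have h2 : (∏ j ∈ A₀, q j) * ∏ j ∈ univ \ A₀, q j = ∏ j, q j := by
        rw [mul_comm]; exact Finset.prod_sdiff (subset_univ _)
      rw [← h1, ← h2]; ring
    have hA0 := ht0 A₀
    have hB0 := ht0 B₀
    nlinarith [sq_nonneg (t A₀ - t B₀), sq_nonneg (t A₀ + t B₀ - 2 * c), hc, hAB]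
  have hsum : ∑ k, (q k * ∏ j ∈ univ.erase k, p j + p k * ∏ j ∈ univ.erase k, q j)
      = ∑ k, t {k} + ∑ k, t (univ \ {k}) := by
    rw [← sum_add_distrib]
    apply Finset.sum_congr rfl
    intro k _
    rw [htsing, htcos]; ring
  rw [htuniv, htempty] at hle
  rw [hsum]
  linarith

section OverlapLemmas

variable {n : Type*} [Fintype n]

lemma overlap_add (ρ σ : Matrix n n ℂ) (φ : n → ℂ) :
    overlap (ρ + σ) φ = overlap ρ φ + overlap σ φ := by
  unfold overlap
  rw [Matrix.add_mulVec, dotProduct_add, Complex.add_re]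

lemma overlap_smul (r : ℝ) (ρ : Matrix n n ℂ) (φ : n → ℂ) :
    overlap ((r : ℂ) • ρ) φ = r * overlap ρ φ := by
  unfold overlap
  rw [Matrix.smul_mulVec, dotProduct_smul]
  simp [Complex.smul_re]

lemma overlap_zero (φ : n → ℂ) : overlap (0 : Matrix n n ℂ) φ = 0 := by
  unfold overlap
  simp [Matrix.zero_mulVec]

lemma overlap_sum {ι : Type*} (s : Finset ι) (ρ : ι → Matrix n n ℂ) (φ : n → ℂ) :
    overlap (∑ k ∈ s, ρ k) φ = ∑ k ∈ s, overlap (ρ k) φ := by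
  classical
  induction s using Finset.induction_on with
  | empty => simp [overlap_zero]
  | insert _ _ h ih => rw [Finset.sum_insert h, Finset.sum_insert h, overlap_add, ih]

lemma overlap_outer [DecidableEq n] (ψ φ : n → ℂ) :
    overlap (outer ψ) φ = Complex.normSq (dotProduct (star ψ) φ) := by
  unfold overlap outer Matrix.mulVec dotProduct
  set w : ℂ := ∑ j, (star ψ) j * φ j with hw
  have h1 : ∀ i, ∑ j, (ψ i * starRingEnd ℂ (ψ j)) * φ j = ψ i * w := by
    intro i
    rw [hw, Finset.mul_sum]
    exact Finset.sum_congr rfl fun j _ => by simp [Pi.star_apply]; ring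
  calc (∑ i, (star φ) i * ∑ j, (ψ i * starRingEnd ℂ (ψ j)) * φ j).re
      = (∑ i, (star φ) i * (ψ i * w)).re := by
        congr 1
        exact Finset.sum_congr rfl fun i _ => by rw [h1]
    _ = ((∑ i, (star φ) i * ψ i) * w).re := by
        rw [Finset.sum_mul]
        congr 1
        exact Finset.sum_congr rfl fun i _ => by ring
    _ = (starRingEnd ℂ w * w).re := by
        congr 2
        rw [hw, map_sum]
        exact Finset.sum_congr rfl fun i _ => by simp [Pi.star_apply]; ring
    _ = Complex.normSq w := by
        rw [mul_comm, Complex.mul_conj, Complex.ofReal_re]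

lemma dot_star_basis [DecidableEq n] (g : n) (φ : n → ℂ) :
    dotProduct (star (basisVec g)) φ = φ g := by
  unfold basisVec dotProduct
  simp

lemma overlap_outer_basis [DecidableEq n] (g : n) (φ : n → ℂ) :
    overlap (outer (basisVec g)) φ = Complex.normSq (φ g) := by
  rw [overlap_outer, dot_star_basis]

end OverlapLemmas

lemma ghzVec_eq {N : ℕ} (hN : 1 ≤ N) :
    ghzVec N = ((1 / Real.sqrt 2 : ℝ) : ℂ) •
      (basisVec (fun _ => 0) + basisVec (fun _ => (1 : Fin 2)) : (Fin N → Fin 2) → ℂ) := by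
  have hzo : (fun _ : Fin N => (0 : Fin 2)) ≠ fun _ => 1 := by
    intro h
    have := congrFun h ⟨0, by omega⟩
    simp at this
  funext i
  by_cases h0 : i = fun _ => 0
  · subst h0; simp [ghzVec, basisVec, hzo]
  · by_cases h1 : i = fun _ => 1
    · subst h1; simp [ghzVec, basisVec, hzo, Ne.symm hzo]
    · simp [ghzVec, basisVec, h0, h1]

lemma overlap_outer_ghz {N : ℕ} (hN : 1 ≤ N) (φ : (Fin N → Fin 2) → ℂ) :
    overlap (outer (ghzVec N)) φ
      = (1 / 2) * Complex.normSq (φ (fun _ => 0) + φ (fun _ => 1)) := by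
  classical
  rw [overlap_outer, ghzVec_eq hN]
  rw [star_smul, smul_dotProduct, star_add, add_dotProduct,
    dot_star_basis, dot_star_basis]
  have : star ((1 / Real.sqrt 2 : ℝ) : ℂ) = ((1 / Real.sqrt 2 : ℝ) : ℂ) := by
    simp [Complex.conj_ofReal]
  rw [this, smul_eq_mul, Complex.normSq_mul, Complex.normSq_ofReal]
  have h2 : (1 / Real.sqrt 2) * (1 / Real.sqrt 2) = 1 / 2 := by
    rw [div_mul_div_comm, one_mul, Real.mul_self_sqrt (by norm_num)]
  rw [h2]

lemma normSq_prodVec {N : ℕ} (a : ∀ _ : Fin N, Fin 2 → ℂ) (g : Fin N → Fin 2) :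
    Complex.normSq (prodVec a g) = ∏ j, Complex.normSq (a j (g j)) := by
  unfold prodVec
  exact map_prod Complex.normSq _ _


lemma unit_basisVec (y : Fin 2) : IsUnitVec (basisVec y) := by
  revert y
  rw [Fin.forall_fin_two]
  constructor <;> · simp [IsUnitVec, Fin.sum_univ_two, basisVec]

lemma prodVec_basis {N : ℕ} (g : Fin N → Fin 2) :
    prodVec (fun j => basisVec (g j)) = basisVec g := by
  funext i
  unfold prodVec basisVec
  by_cases h : i = g
  · subst h; simp
  · rw [if_neg h]
    obtain ⟨j, hj⟩ := Function.ne_iff.mp h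
    exact Finset.prod_eq_zero (Finset.mem_univ j) (if_neg hj)

lemma overlap_durState_eq {N : ℕ} (hN : 1 ≤ N) (x : ℝ) (φ : (Fin N → Fin 2) → ℂ) :
    overlap (durState N x) φ
      = x * ((1 / 2) * Complex.normSq (φ (fun _ => 0) + φ (fun _ => 1)))
        + ((1 - x) / (2 * N)) *
          ∑ k, (Complex.normSq (φ (uLabel k)) + Complex.normSq (φ (vLabel k))) := by
  unfold durState
  rw [overlap_add, overlap_smul, overlap_smul, overlap_sum, overlap_outer_ghz hN]
  congr 1
  congr 1
  apply Finset.sum_congr rfl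
  intro k _
  rw [overlap_add, overlap_outer_basis, overlap_outer_basis]

set_option maxHeartbeats 1000000 in
open Finset in
lemma overlap_durState_prod_le {N : ℕ} (hN : 4 ≤ N) (x : ℝ) (hx0 : 0 ≤ x) (hx1 : x ≤ 1)
    (a : ∀ _ : Fin N, Fin 2 → ℂ) (ha : ∀ j, IsUnitVec (a j)) :
    overlap (durState N x) (prodVec a) ≤ max ((1 - x) / (2 * N)) (x / 2) := by
  classical
  have hnormSq : ∀ z : ℂ, Complex.normSq z = ‖z‖ ^ 2 := by
    intro z; rw [Complex.normSq_eq_norm_sq]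
  set φ := prodVec a with hφ
  set α : Fin N → ℝ := fun j => ‖a j 0‖ with hα
  set β : Fin N → ℝ := fun j => ‖a j 1‖ with hβ
  set p : Fin N → ℝ := fun j => α j ^ 2 with hpdef
  set q : Fin N → ℝ := fun j => β j ^ 2 with hqdef
  have hp : ∀ j, 0 ≤ p j := fun j => sq_nonneg _
  have hq : ∀ j, 0 ≤ q j := fun j => sq_nonneg _
  have hpq : ∀ j, p j + q j = 1 := by
    intro j
    have := ha j
    unfold IsUnitVec at this
    rwa [Fin.sum_univ_two] at this
  -- values of normSq at basis labels
  have hgen : ∀ g : Fin N → Fin 2, Complex.normSq (φ g) = ∏ j, ‖a j (g j)‖ ^ 2 := by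
    intro g
    rw [hφ, normSq_prodVec]
    exact Finset.prod_congr rfl fun j _ => hnormSq _
  have hu : ∀ k, Complex.normSq (φ (uLabel k)) = q k * ∏ j ∈ univ.erase k, p j := by
    intro k
    rw [hgen]
    rw [← Finset.mul_prod_erase univ _ (Finset.mem_univ k)]
    congr 1
    · simp [uLabel, hqdef, hβ]
    · apply Finset.prod_congr rfl
      intro j hj
      have : j ≠ k := (Finset.mem_erase.mp hj).1
      simp [uLabel, this, hpdef, hα]
  have hv : ∀ k, Complex.normSq (φ (vLabel k)) = p k * ∏ j ∈ univ.erase k, q j := by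
    intro k
    rw [hgen]
    rw [← Finset.mul_prod_erase univ _ (Finset.mem_univ k)]
    congr 1
    · simp [vLabel, hpdef, hα]
    · apply Finset.prod_congr rfl
      intro j hj
      have : j ≠ k := (Finset.mem_erase.mp hj).1
      simp [vLabel, this, hqdef, hβ]
  -- GHZ term bound
  have hz : ‖φ (fun _ => 0)‖ = ∏ j, α j := by
    rw [hφ]; unfold prodVec
    rw [norm_prod]
  have ho : ‖φ (fun _ => 1)‖ = ∏ j, β j := by
    rw [hφ]; unfold prodVec
    rw [norm_prod]
  have hghz : Complex.normSq (φ (fun _ => 0) + φ (fun _ => 1))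
      ≤ ((∏ j, α j) + ∏ j, β j) ^ 2 := by
    rw [hnormSq, ← hz, ← ho]
    have h1 : ‖φ (fun _ => 0) + φ (fun _ => 1)‖ ≤ ‖φ (fun _ => 0)‖ + ‖φ (fun _ => 1)‖ :=
      norm_add_le _ _
    have h2 : (0 : ℝ) ≤ ‖φ (fun _ => 0) + φ (fun _ => 1)‖ := norm_nonneg _
    nlinarith [norm_nonneg (φ (fun _ => 0)), norm_nonneg (φ (fun _ => 1))]
  -- key inequality
  set c : ℝ := (∏ j, α j) * ∏ j, β j with hcdef
  have hc0 : 0 ≤ c :=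
    mul_nonneg (prod_nonneg fun j _ => norm_nonneg _) (prod_nonneg fun j _ => norm_nonneg _)
  have hc : c ^ 2 ≤ (∏ j, p j) * ∏ j, q j := by
    rw [hcdef, hpdef, hqdef, mul_pow, Finset.prod_pow, Finset.prod_pow]
  have hkey := key_ineq hN p q hp hq hpq c hc0 hc
  have hS : ((∏ j, α j) + ∏ j, β j) ^ 2 = ∏ j, p j + ∏ j, q j + 2 * c := by
    rw [hpdef, hqdef, Finset.prod_pow, Finset.prod_pow, hcdef]; ring
  -- assemble
  rw [overlap_durState_eq (by omega) x]
  set M := max ((1 - x) / (2 * N)) (x / 2) with hM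
  have hcN : (1 - x) / (2 * N) ≤ M := le_max_left _ _
  have hx2 : x / 2 ≤ M := le_max_right _ _
  have hM0 : 0 ≤ M := le_trans (by linarith : (0:ℝ) ≤ x / 2) hx2
  have hsum : ∑ k, (Complex.normSq (φ (uLabel k)) + Complex.normSq (φ (vLabel k)))
      = ∑ k, (q k * ∏ j ∈ univ.erase k, p j + p k * ∏ j ∈ univ.erase k, q j) :=
    Finset.sum_congr rfl fun k _ => by rw [hu k, hv k]
  rw [hsum]
  have hT0 : (0:ℝ) ≤ ∑ k, (q k * ∏ j ∈ univ.erase k, p j + p k * ∏ j ∈ univ.erase k, q j) :=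
    Finset.sum_nonneg fun k _ =>
      add_nonneg (mul_nonneg (hq k) (prod_nonneg fun j _ => hp j))
        (mul_nonneg (hp k) (prod_nonneg fun j _ => hq j))
  have hS2 : Complex.normSq (φ (fun _ => 0) + φ (fun _ => 1))
      ≤ ∏ j, p j + ∏ j, q j + 2 * c := by
    rw [← hS]; exact hghz
  have hG0 : (0:ℝ) ≤ Complex.normSq (φ (fun _ => 0) + φ (fun _ => 1)) :=
    Complex.normSq_nonneg _
  have hA0 : (0:ℝ) ≤ ∏ j, p j + ∏ j, q j + 2 * c := le_trans hG0 hS2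
  have e1 : x * ((1 / 2) * Complex.normSq (φ (fun _ => 0) + φ (fun _ => 1)))
      ≤ (x / 2) * (∏ j, p j + ∏ j, q j + 2 * c) := by nlinarith
  have e2 : (x / 2) * (∏ j, p j + ∏ j, q j + 2 * c)
      ≤ M * (∏ j, p j + ∏ j, q j + 2 * c) :=
    mul_le_mul_of_nonneg_right hx2 hA0
  have e3 : (1 - x) / (2 * (N:ℝ)) *
        (∑ k, (q k * ∏ j ∈ univ.erase k, p j + p k * ∏ j ∈ univ.erase k, q j))
      ≤ M * (∑ k, (q k * ∏ j ∈ univ.erase k, p j + p k * ∏ j ∈ univ.erase k, q j)) :=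
    mul_le_mul_of_nonneg_right hcN hT0
  have e4 := mul_le_mul_of_nonneg_left hkey hM0
  nlinarith [e1, e2, e3, e4]

lemma uLabel_ne_zero {N : ℕ} (k : Fin N) : uLabel k ≠ fun _ => (0 : Fin 2) := by
  intro h
  have := congrFun h k
  simp [uLabel] at this

lemma vLabel_ne_zero {N : ℕ} (hN : 2 ≤ N) (k : Fin N) : vLabel k ≠ fun _ => (0 : Fin 2) := by
  intro h
  obtain ⟨j, hj⟩ : ∃ j : Fin N, j ≠ k := by
    obtain ⟨j, hj⟩ := Fintype.exists_ne_of_one_lt_card (by simp; omega) k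
    exact ⟨j, hj⟩
  have := congrFun h j
  simp [vLabel, hj] at this

open Finset in
lemma overlap_durState_z {N : ℕ} (hN : 2 ≤ N) (x : ℝ) :
    overlap (durState N x) (basisVec (fun _ => (0 : Fin 2))) = x / 2 := by
  rw [overlap_durState_eq (by omega) x]
  have hzo : (fun _ : Fin N => (1 : Fin 2)) ≠ fun _ => 0 := by
    intro h
    have := congrFun h ⟨0, by omega⟩
    simp at this
  have h1 : basisVec (n := Fin N → Fin 2) (fun _ => 0) (fun _ => 0) = 1 := by simp [basisVec]
  have h2 : basisVec (n := Fin N → Fin 2) (fun _ => 0) (fun _ => 1) = 0 := by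
    simp [basisVec, hzo]
  rw [h1, h2]
  have h3 : ∀ k : Fin N, basisVec (n := Fin N → Fin 2) (fun _ => 0) (uLabel k) = 0 := by
    intro k; simp [basisVec, uLabel_ne_zero k]
  have h4 : ∀ k : Fin N, basisVec (n := Fin N → Fin 2) (fun _ => 0) (vLabel k) = 0 := by
    intro k; simp [basisVec, vLabel_ne_zero hN k]
  have h5 : ∑ k : Fin N, (Complex.normSq (basisVec (n := Fin N → Fin 2) (fun _ => 0) (uLabel k))
      + Complex.normSq (basisVec (n := Fin N → Fin 2) (fun _ => 0) (vLabel k))) = 0 := by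
    apply Finset.sum_eq_zero
    intro k _
    rw [h3, h4]; simp
  rw [h5]
  norm_num [Complex.normSq_one]
  ring

open Finset in
lemma overlap_durState_u {N : ℕ} (hN : 3 ≤ N) (x : ℝ) (k₀ : Fin N) :
    overlap (durState N x) (basisVec (uLabel k₀)) = (1 - x) / (2 * N) := by
  rw [overlap_durState_eq (by omega) x]
  have hz : (fun _ : Fin N => (0 : Fin 2)) ≠ uLabel k₀ := fun h => uLabel_ne_zero k₀ h.symm
  have ho : (fun _ : Fin N => (1 : Fin 2)) ≠ uLabel k₀ := by
    intro h
    obtain ⟨j, hj⟩ := Fintype.exists_ne_of_one_lt_card (α := Fin N) (by simp; omega) k₀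
    have := congrFun h j
    simp [uLabel, hj] at this
  have h1 : basisVec (n := Fin N → Fin 2) (uLabel k₀) (fun _ => 0) = 0 := by
    simp [basisVec, hz]
  have h2 : basisVec (n := Fin N → Fin 2) (uLabel k₀) (fun _ => 1) = 0 := by
    simp [basisVec, ho]
  rw [h1, h2]
  have h3 : ∀ k : Fin N, basisVec (n := Fin N → Fin 2) (uLabel k₀) (uLabel k)
      = if k = k₀ then 1 else 0 := by
    intro k
    by_cases h : k = k₀
    · subst h; simp [basisVec]
    · rw [if_neg h]
      have huu : uLabel k ≠ uLabel k₀ := by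
        intro he
        have := congrFun he k
        simp [uLabel, h] at this
      simp [basisVec, huu]
  have h4 : ∀ k : Fin N, basisVec (n := Fin N → Fin 2) (uLabel k₀) (vLabel k) = 0 := by
    intro k
    have hne : vLabel k ≠ uLabel k₀ := by
      intro he
      have hkk : k ≠ k₀ := by
        intro h
        subst h
        have := congrFun he k
        simp [vLabel, uLabel] at this
      have hcard : ({k, k₀} : Finset (Fin N)) ≠ univ := by
        intro h
        have := congrArg Finset.card h
        rw [card_univ, Fintype.card_fin] at this
        have hle : ({k, k₀} : Finset (Fin N)).card ≤ 2 := by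
          apply le_trans (Finset.card_insert_le _ _)
          simp
        omega
      obtain ⟨j, -, hj⟩ := Finset.exists_of_ssubset
        (Finset.ssubset_univ_iff.mpr hcard)
      have hjk : j ≠ k := fun h => hj (by simp [h])
      have hjk0 : j ≠ k₀ := fun h => hj (by simp [h])
      have := congrFun he j
      simp [vLabel, uLabel, hjk, hjk0] at this
    simp [basisVec, hne]
  have h5 : ∑ k : Fin N, (Complex.normSq (basisVec (n := Fin N → Fin 2) (uLabel k₀) (uLabel k))
      + Complex.normSq (basisVec (n := Fin N → Fin 2) (uLabel k₀) (vLabel k)))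
      = 1 := by
    rw [Finset.sum_congr rfl fun k _ => by rw [h3, h4]]
    simp [apply_ite Complex.normSq]
  rw [h5]
  norm_num

/-- **Geometric measure of Dür's multipartite entangled states.** For N ≥ 4 and
0 ≤ x ≤ 1, Λ²(ρ_N(x)) = max{(1−x)/(2N), x/2}; that is, Λ² = (1−x)/(2N) for
0 ≤ x ≤ 1/(N+1) and Λ² = x/2 for 1/(N+1) ≤ x ≤ 1. -/
theorem gm_durState {N : ℕ} (hN : 4 ≤ N) (x : ℝ) (hx0 : 0 ≤ x) (hx1 : x ≤ 1) :
    maxOverlap (durState N x) = max ((1 - x) / (2 * N)) (x / 2) ∧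
    (x ≤ 1 / ((N : ℝ) + 1) → maxOverlap (durState N x) = (1 - x) / (2 * N)) ∧
    (1 / ((N : ℝ) + 1) ≤ x → maxOverlap (durState N x) = x / 2) := by
  classical
  have hNpos : (0 : ℝ) < N := by
    have : (4:ℝ) ≤ N := by exact_mod_cast hN
    linarith
  set Sset : Set ℝ := {r : ℝ | ∃ a : ∀ _ : Fin N, Fin 2 → ℂ,
    (∀ j, IsUnitVec (a j)) ∧ r = overlap (durState N x) (prodVec a)} with hSset
  have hmax : maxOverlap (durState N x) = sSup Sset := rfl
  have hub : ∀ r ∈ Sset, r ≤ max ((1 - x) / (2 * N)) (x / 2) := by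
    rintro r ⟨a, ha, rfl⟩
    exact overlap_durState_prod_le hN x hx0 hx1 a ha
  have hmem1 : x / 2 ∈ Sset := by
    refine ⟨fun j => basisVec ((fun _ => (0 : Fin 2)) j), fun j => unit_basisVec _, ?_⟩
    rw [prodVec_basis, overlap_durState_z (by omega) x]
  have hmem2 : (1 - x) / (2 * N) ∈ Sset := by
    refine ⟨fun j => basisVec (uLabel (⟨0, by omega⟩ : Fin N) j), fun j => unit_basisVec _, ?_⟩
    rw [prodVec_basis, overlap_durState_u (by omega) x]
  have hbdd : BddAbove Sset := ⟨max ((1 - x) / (2 * N)) (x / 2), fun r hr => hub r hr⟩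
  have hfst : maxOverlap (durState N x) = max ((1 - x) / (2 * N)) (x / 2) := by
    rw [hmax]
    apply le_antisymm
    · exact csSup_le ⟨_, hmem1⟩ hub
    · exact max_le (le_csSup hbdd hmem2) (le_csSup hbdd hmem1)
  refine ⟨hfst, ?_, ?_⟩
  · intro hx
    rw [hfst, max_eq_left]
    rw [div_le_div_iff₀ (by norm_num) (by linarith)]
    rw [le_div_iff₀ (by linarith : (0:ℝ) < (N:ℝ) + 1)] at hx
    nlinarith
  · intro hx
    rw [hfst, max_eq_right]
    rw [div_le_div_iff₀ (by linarith) (by norm_num)]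
    rw [div_le_iff₀ (by linarith : (0:ℝ) < (N:ℝ) + 1)] at hx
    nlinarith

end Paper
end

section
/- Universal upper bound on the geometric measure of tensor products: let ρ and ρ' be N-partite density matrices on H = ⊗_{j=1}^N ℂ^{d_j}, let d_T = ∏_{j=1}^N d_j, and let ρ'^* denote the entrywise complex conjugate of ρ' in the computational basis. Then Λ²(ρ ⊗ ρ') ≥ tr(ρ ρ'^*)/d_T, where ρ ⊗ ρ' is regarded as N-partite by grouping corresponding parties; hence, when tr(ρ ρ'^*) > 0, G(ρ ⊗ ρ') ≤ log₂ d_T − log₂ tr(ρ ρ'^*). In particular Λ²(ρ ⊗ ρ^*) ≥ tr(ρ²)/d_T, so G(ρ ⊗ ρ^*) ≤ log₂ d_T − log₂ tr(ρ²). -/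
open scoped BigOperators ComplexOrder

namespace Paper

lemma unit_entry_le {n : Type*} [Fintype n] {a : n → ℂ} (h : IsUnitVec a) (x : n) :
    ‖a x‖ ≤ 1 := by
  have h1 : ‖a x‖ ^ 2 ≤ 1 := by
    rw [← h]
    exact Finset.single_le_sum (f := fun i => ‖a i‖ ^ 2) (fun i _ => by positivity)
      (Finset.mem_univ x)
  nlinarith [norm_nonneg (a x)]

lemma diag_sum {N : ℕ} (d : Fin N → ℕ) (g : (∀ j, Fin (d j) × Fin (d j)) → ℂ) :
    ∑ i, (if (fun j => (i j).1) = (fun j => (i j).2) then g i else 0)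
      = ∑ x : ∀ j, Fin (d j), g (fun j => (x j, x j)) := by
  let E : (∀ j, Fin (d j) × Fin (d j)) ≃ ((∀ j, Fin (d j)) × (∀ j, Fin (d j))) :=
    { toFun := fun i => (fun j => (i j).1, fun j => (i j).2)
      invFun := fun p j => (p.1 j, p.2 j)
      left_inv := fun i => rfl
      right_inv := fun p => rfl }
  rw [← E.symm.sum_comp, Fintype.sum_prod_type]
  refine Finset.sum_congr rfl fun x _ => ?_
  have : ∀ y : ∀ j, Fin (d j),
      (if (fun j => ((E.symm (x, y)) j).1) = (fun j => ((E.symm (x, y)) j).2)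
        then g (E.symm (x, y)) else 0)
      = (if x = y then g (fun j => (x j, x j)) else 0) := by
    intro y
    by_cases h : x = y
    · subst h; simp [E]
    · rw [if_neg h, if_neg]
      intro hc
      exact h (funext fun j => congrFun hc j)
  simp_rw [this]
  rw [Finset.sum_ite_eq]
  simp

/-- Every element of the overlap set is bounded by the sum of entry norms. -/

lemma overlap_mem_le {N : ℕ} {ι : Fin N → Type*} [∀ j, Fintype (ι j)]
    (τ : Matrix (∀ j, ι j) (∀ j, ι j) ℂ) {r : ℝ}
    (hr : ∃ a : ∀ j, ι j → ℂ, (∀ j, IsUnitVec (a j)) ∧ r = overlap τ (prodVec a)) :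
    r ≤ ∑ i, ∑ i', ‖τ i i'‖ := by
  obtain ⟨a, ha, rfl⟩ := hr
  set φ := prodVec a with hφdef
  have hφ : ∀ i, ‖φ i‖ ≤ 1 := by
    intro i
    calc ‖∏ j, a j (i j)‖ = ∏ j, ‖a j (i j)‖ := norm_prod _ _
      _ ≤ ∏ j : Fin N, 1 :=
        Finset.prod_le_prod (fun j _ => norm_nonneg _)
          (fun j _ => unit_entry_le (ha j) _)
      _ = 1 := Finset.prod_const_one
  unfold overlap
  calc (dotProduct (star φ) (τ.mulVec φ)).re
      ≤ ‖dotProduct (star φ) (τ.mulVec φ)‖ := Complex.re_le_norm _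
    _ ≤ ∑ i, ‖star φ i * τ.mulVec φ i‖ := norm_sum_le _ _
    _ ≤ ∑ i, ∑ i', ‖τ i i'‖ := by
        refine Finset.sum_le_sum fun i _ => ?_
        rw [norm_mul]
        calc ‖star φ i‖ * ‖τ.mulVec φ i‖ ≤ 1 * ‖τ.mulVec φ i‖ := by
              have := hφ i
              have h2 : ‖star φ i‖ = ‖φ i‖ := norm_star _
              nlinarith [norm_nonneg (τ.mulVec φ i)]
          _ = ‖τ.mulVec φ i‖ := one_mul _
          _ ≤ ∑ i', ‖τ i i' * φ i'‖ := norm_sum_le _ _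
          _ ≤ ∑ i', ‖τ i i'‖ := by
              refine Finset.sum_le_sum fun i' _ => ?_
              rw [norm_mul]
              nlinarith [hφ i', norm_nonneg (τ i i'), norm_nonneg (φ i')]

lemma key_lemma {N : ℕ} (d : Fin N → ℕ)
    (ρ ρ' : Matrix (∀ j, Fin (d j)) (∀ j, Fin (d j)) ℂ)
    (hρ : IsDensityMatrix ρ) (hρ' : IsDensityMatrix ρ') :
    (ρ * ρ'.map (starRingEnd ℂ)).trace.re / (∏ j, (d j : ℝ)) ≤
      maxOverlap (tensorGrouped ρ ρ') := by
  -- each d j is positive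
  have hd : ∀ j, 0 < d j := by
    intro j
    by_contra h
    have hj : d j = 0 := by omega
    haveI : IsEmpty (Fin (d j)) := by rw [hj]; exact Fin.isEmpty'
    haveI : IsEmpty (∀ j, Fin (d j)) := ⟨fun f => isEmptyElim (f j)⟩
    have : ρ.trace = 0 := by simp [Matrix.trace]
    rw [hρ.2] at this
    exact one_ne_zero this
  set cr : ℝ := ∏ j, (Real.sqrt (d j))⁻¹ with hcr
  have hcrpos : 0 < cr := Finset.prod_pos fun j _ => by
    have := hd j; positivity
  -- the witness product vector
  set a : ∀ j, Fin (d j) × Fin (d j) → ℂ :=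
    fun j p => if p.1 = p.2 then (((Real.sqrt (d j))⁻¹ : ℝ) : ℂ) else 0 with ha
  have haunit : ∀ j, IsUnitVec (a j) := by
    intro j
    unfold IsUnitVec
    rw [Fintype.sum_prod_type]
    have : ∀ x y : Fin (d j), ‖a j (x, y)‖ ^ 2 =
        if x = y then ((d j : ℝ))⁻¹ else 0 := by
      intro x y
      by_cases h : x = y
      · simp only [ha, h, if_pos rfl, if_true]
        rw [Complex.norm_real, Real.norm_eq_abs, abs_of_nonneg (by positivity),
          ← Real.sqrt_inv]
        exact Real.sq_sqrt (by positivity)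
      · simp [ha, h]
    simp_rw [this]
    simp only [Finset.sum_ite_eq, Finset.mem_univ, if_true]
    rw [Finset.sum_const, Finset.card_univ, Fintype.card_fin, nsmul_eq_mul]
    exact mul_inv_cancel₀ (by exact_mod_cast (hd j).ne')
  -- φ i is cr on the "diagonal", 0 elsewhere
  set φ := prodVec a with hφdef
  have hφ : ∀ i, φ i = if (fun j => (i j).1) = (fun j => (i j).2) then (cr : ℂ) else 0 := by
    intro i
    by_cases h : (fun j => (i j).1) = (fun j => (i j).2)
    · rw [if_pos h]
      unfold φ
      unfold prodVec
      push_cast [hcr]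
      refine Finset.prod_congr rfl fun j _ => ?_
      simp [ha, congrFun h j]
    · rw [if_neg h]
      obtain ⟨j, hj⟩ : ∃ j, (i j).1 ≠ (i j).2 := by
        by_contra hc
        push_neg at hc
        exact h (funext hc)
      unfold φ
      unfold prodVec
      exact Finset.prod_eq_zero (Finset.mem_univ j) (by simp [ha, hj])
  -- the double sum over the diagonal
  set T2 : ℂ := ∑ x : ∀ j, Fin (d j), ∑ x' : ∀ j, Fin (d j), ρ x x' * ρ' x x' with hT2
  have htr : (ρ * ρ'.map (starRingEnd ℂ)).trace = T2 := by
    rw [Matrix.trace]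
    simp only [Matrix.diag_apply, Matrix.mul_apply, Matrix.map_apply]
    refine Finset.sum_congr rfl fun x _ => Finset.sum_congr rfl fun x' _ => ?_
    congr 1
    simpa using hρ'.1.1.apply x x'
  -- compute the overlap
  have hover : overlap (tensorGrouped ρ ρ') φ = cr ^ 2 * T2.re := by
    unfold overlap
    have hS : dotProduct (star φ) ((tensorGrouped ρ ρ').mulVec φ)
        = (cr : ℂ) ^ 2 * T2 := by
      rw [dotProduct]
      have hstep : ∀ i, star φ i * (tensorGrouped ρ ρ').mulVec φ i
          = (if (fun j => (i j).1) = (fun j => (i j).2) then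
              (cr : ℂ) * ∑ i', (tensorGrouped ρ ρ') i i' * φ i' else 0) := by
        intro i
        rw [Pi.star_apply, hφ i]
        by_cases h : (fun j => (i j).1) = (fun j => (i j).2)
        · rw [if_pos h, if_pos h]
          simp [Matrix.mulVec, dotProduct]
        · rw [if_neg h, if_neg h]
          simp
      rw [Finset.sum_congr rfl fun i _ => hstep i, diag_sum]
      have hinner : ∀ x : ∀ j, Fin (d j),
          ∑ i', (tensorGrouped ρ ρ') (fun j => (x j, x j)) i' * φ i'
          = (cr : ℂ) * ∑ x', ρ x x' * ρ' x x' := by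
        intro x
        have : ∀ i', (tensorGrouped ρ ρ') (fun j => (x j, x j)) i' * φ i'
            = (if (fun j => (i' j).1) = (fun j => (i' j).2) then
                (tensorGrouped ρ ρ') (fun j => (x j, x j)) i' * (cr : ℂ) else 0) := by
          intro i'
          rw [hφ i']
          by_cases h : (fun j => (i' j).1) = (fun j => (i' j).2)
          · rw [if_pos h, if_pos h]
          · rw [if_neg h, if_neg h, mul_zero]
        rw [Finset.sum_congr rfl fun i' _ => this i', diag_sum, Finset.mul_sum]
        refine Finset.sum_congr rfl fun x' _ => ?_
        show (tensorGrouped ρ ρ') (fun j => (x j, x j)) (fun j => (x' j, x' j)) * (cr:ℂ)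
          = (cr:ℂ) * (ρ x x' * ρ' x x')
        rw [mul_comm]
        rfl
      simp_rw [hinner]
      rw [hT2, Finset.mul_sum]
      refine Finset.sum_congr rfl fun x _ => ?_
      ring
    rw [hS]
    have : ((cr : ℂ) ^ 2) = ((cr ^ 2 : ℝ) : ℂ) := by push_cast; ring
    rw [this]
    simp [Complex.mul_re, ← Complex.ofReal_pow]
  -- cr^2 = (∏ d j)⁻¹
  have hcr2 : cr ^ 2 = (∏ j, (d j : ℝ))⁻¹ := by
    rw [hcr, ← Finset.prod_pow, ← Finset.prod_inv_distrib]
    refine Finset.prod_congr rfl fun j _ => ?_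
    rw [inv_pow, Real.sq_sqrt (by positivity)]
  -- conclude by le_csSup
  have hmem : cr ^ 2 * T2.re ∈
      {r : ℝ | ∃ a : ∀ j, Fin (d j) × Fin (d j) → ℂ,
        (∀ j, IsUnitVec (a j)) ∧ r = overlap (tensorGrouped ρ ρ') (prodVec a)} :=
    ⟨a, haunit, hover.symm⟩
  have hbdd : BddAbove {r : ℝ | ∃ a : ∀ j, Fin (d j) × Fin (d j) → ℂ,
      (∀ j, IsUnitVec (a j)) ∧ r = overlap (tensorGrouped ρ ρ') (prodVec a)} :=
    ⟨∑ i, ∑ i', ‖(tensorGrouped ρ ρ') i i'‖, fun r hr => overlap_mem_le _ hr⟩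
  have := le_csSup hbdd hmem
  rw [maxOverlap]
  calc (ρ * ρ'.map (starRingEnd ℂ)).trace.re / (∏ j, (d j : ℝ))
      = cr ^ 2 * T2.re := by rw [htr, hcr2]; ring
    _ ≤ _ := this

lemma dims_pos {N : ℕ} (d : Fin N → ℕ)
    (ρ : Matrix (∀ j, Fin (d j)) (∀ j, Fin (d j)) ℂ)
    (hρ : IsDensityMatrix ρ) : ∀ j, 0 < d j := by
  intro j
  by_contra h
  have hj : d j = 0 := by omega
  haveI : IsEmpty (Fin (d j)) := by rw [hj]; exact Fin.isEmpty'
  haveI : IsEmpty (∀ j, Fin (d j)) := ⟨fun f => isEmptyElim (f j)⟩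
  have : ρ.trace = 0 := by simp [Matrix.trace]
  rw [hρ.2] at this
  exact one_ne_zero this

lemma gm_step {N : ℕ} {ι : Fin N → Type*} [∀ j, Fintype (ι j)]
    (τ : Matrix (∀ j, ι j) (∀ j, ι j) ℂ) {t dT : ℝ} (hdT : 0 < dT) (ht : 0 < t)
    (h : t / dT ≤ maxOverlap τ) :
    -Real.logb 2 (maxOverlap τ) ≤ Real.logb 2 dT - Real.logb 2 t := by
  have hpos : 0 < t / dT := div_pos ht hdT
  have hΛ : 0 < maxOverlap τ := lt_of_lt_of_le hpos h
  have h2 := (Real.logb_le_logb (b := 2) one_lt_two hpos hΛ).mpr h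
  rw [Real.logb_div ht.ne' hdT.ne'] at h2
  linarith

/-- **Universal upper bound on the geometric measure of tensor products.**
For N-partite density matrices ρ, ρ' on ⊗_j ℂ^{d_j} with d_T = ∏_j d_j,
Λ²(ρ ⊗ ρ') ≥ tr(ρρ'^*)/d_T, hence G(ρ ⊗ ρ') ≤ log₂ d_T − log₂ tr(ρρ'^*) whenever
tr(ρρ'^*) > 0; in particular Λ²(ρ ⊗ ρ^*) ≥ tr(ρ²)/d_T and
G(ρ ⊗ ρ^*) ≤ log₂ d_T − log₂ tr(ρ²). -/
theorem gm_tensor_upper_bound {N : ℕ} (d : Fin N → ℕ)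
    (ρ ρ' : Matrix (∀ j, Fin (d j)) (∀ j, Fin (d j)) ℂ)
    (hρ : IsDensityMatrix ρ) (hρ' : IsDensityMatrix ρ') :
    ((ρ * ρ'.map (starRingEnd ℂ)).trace.re / (∏ j, (d j : ℝ)) ≤
      maxOverlap (tensorGrouped ρ ρ')) ∧
    (0 < (ρ * ρ'.map (starRingEnd ℂ)).trace.re →
      gm (tensorGrouped ρ ρ') ≤
        Real.logb 2 (∏ j, (d j : ℝ)) -
          Real.logb 2 ((ρ * ρ'.map (starRingEnd ℂ)).trace.re)) ∧
    ((ρ * ρ).trace.re / (∏ j, (d j : ℝ)) ≤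
      maxOverlap (tensorGrouped ρ (ρ.map (starRingEnd ℂ)))) ∧
    (0 < (ρ * ρ).trace.re →
      gm (tensorGrouped ρ (ρ.map (starRingEnd ℂ))) ≤
        Real.logb 2 (∏ j, (d j : ℝ)) - Real.logb 2 ((ρ * ρ).trace.re)) := by
  have hd := dims_pos d ρ hρ
  have hdT : 0 < ∏ j, (d j : ℝ) := Finset.prod_pos fun j _ => by exact_mod_cast hd j
  have hmapρ : ρ.map (starRingEnd ℂ) = ρ.transpose := by
    ext i j
    simpa using hρ.1.1.apply j i
  have hρ'' : IsDensityMatrix (ρ.map (starRingEnd ℂ)) := by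
    rw [hmapρ]
    exact ⟨hρ.1.transpose, by rw [Matrix.trace_transpose]; exact hρ.2⟩
  have hmm : (ρ.map (starRingEnd ℂ)).map (starRingEnd ℂ) = ρ := by
    ext i j; simp
  have key1 := key_lemma d ρ ρ' hρ hρ'
  have key2 := key_lemma d ρ (ρ.map (starRingEnd ℂ)) hρ hρ''
  rw [hmm] at key2
  unfold gm
  exact ⟨key1, fun ht => gm_step _ hdT ht key1, key2, fun ht => gm_step _ hdT ht key2⟩

end Paper
end
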